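/- arXiv:2009.13131 — 2 statements merged into one kernel-verified Lean document; each statement's English description precedes it below -/
import Mathlib

section
/- Let C > 0, 0 < α < 1, and let (x_τ)_{τ∈ℕ} be a sequence of nonnegative reals satisfying x_{τ+1} ≤ C·(max(x_τ, x_{τ+1}))^α + C for all τ. Then there exists a constant M > 0 (depending only on C and α) such that x_τ ≤ M for all τ ≥ 1. -/
/-!
Above some threshold `R` the map `t ↦ C t^α + C` lies strictly below the identity, because
`t^α = o(t)`. So whenever `x (n+1)` exceeds both `x n` and `R`, the recursion
`x (n+1) ≤ C (x (n+1))^α + C` is violated; hence `x (n+1) ≤ max (x n) R`, and by induction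
every term is bounded by `max (x 0) R`.
-/

open Filter Asymptotics

lemma isLittleO_rpow_id_atTop {α : ℝ} (hα : α < 1) : (fun t : ℝ => t ^ α) =o[atTop] id := by
  have hpos : ∀ᶠ t : ℝ in atTop, 0 < t := eventually_gt_atTop 0
  refine (isLittleO_iff_tendsto' (hpos.mono fun t ht h => absurd h ht.ne')).2 ?_
  refine (tendsto_rpow_neg_atTop (by linarith : 0 < 1 - α)).congr' ?_
  filter_upwards [hpos] with t ht
  rw [neg_sub, Real.rpow_sub_one ht.ne']

lemma eventually_mul_rpow_add_lt (C : ℝ) {α : ℝ} (hα : α < 1) :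
    ∀ᶠ t in atTop, C * t ^ α + C < t := by
  have h := ((isLittleO_rpow_id_atTop hα).const_mul_left C).add (isLittleO_const_id_atTop C)
  filter_upwards [h.def (by norm_num : (0:ℝ) < 1 / 2), eventually_gt_atTop 0] with t ht ht0
  rw [Real.norm_eq_abs, id, Real.norm_of_nonneg ht0.le] at ht
  linarith [le_abs_self (C * t ^ α + C)]

lemma le_max_of_le_apply_max {β : Type*} [LinearOrder β] {g : β → β} {R a b : β}
    (hg : ∀ t, R ≤ t → g t < t) (h : b ≤ g (max a b)) : b ≤ max a R := by
  by_contra! hb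
  rw [max_lt_iff] at hb
  rw [max_eq_right hb.1.le] at h
  exact (h.trans_lt (hg b hb.2.le)).false

lemma le_max_initial_of_succ_le_max {β : Type*} [LinearOrder β] {x : ℕ → β} {R : β}
    (h : ∀ n, x (n + 1) ≤ max (x n) R) (n : ℕ) : x n ≤ max (x 0) R := by
  induction n with
  | zero => exact le_max_left _ _
  | succ n ih => exact (h n).trans (max_le ih (le_max_right _ _))

theorem stmt5_general (C α : ℝ) (hα1 : α < 1)
    (x : ℕ → ℝ)
    (hrec : ∀ τ, x (τ + 1) ≤ C * (max (x τ) (x (τ + 1))) ^ α + C) :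
    ∃ M : ℝ, 0 < M ∧ ∀ τ, 1 ≤ τ → x τ ≤ M := by
  obtain ⟨R, hR⟩ := eventually_atTop.1 (eventually_mul_rpow_add_lt C hα1)
  have hbound := le_max_initial_of_succ_le_max fun n => le_max_of_le_apply_max hR (hrec n)
  exact ⟨max (max (x 0) R) 1, lt_max_of_lt_right one_pos,
    fun τ _ => (hbound τ).trans (le_max_left _ _)⟩

theorem stmt5 (C α : ℝ) (hC : 0 < C) (hα0 : 0 < α) (hα1 : α < 1)
    (x : ℕ → ℝ) (hx : ∀ τ, 0 ≤ x τ)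
    (hrec : ∀ τ, x (τ + 1) ≤ C * (max (x τ) (x (τ + 1))) ^ α + C) :
    ∃ M : ℝ, 0 < M ∧ ∀ τ, 1 ≤ τ → x τ ≤ M :=
  stmt5_general C α hα1 x hrec
end

section
/- Suppose φ : [0,∞) → [0,∞) is differentiable, and there are constants ω > 0, C > 0, κ > 0 and a nonnegative function h : [0,∞) → [0,∞) such that φ'(t) ≤ −ω φ(t) + h(t)·(C φ(t)^{κ/2} − ω) for all t ≥ 0. If φ(0)^{κ/2} < ω/C, then φ(t) ≤ e^{−ωt} φ(0) for all t ≥ 0. -/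
/-! As long as `C φ ^ (κ / 2) < ω`, the nonlinear term has a nonpositive sign, so
`φ' ≤ -ω φ` and Grönwall gives `φ t ≤ e^{-ω t} φ 0 ≤ φ 0`; in particular `φ ^ (κ / 2)` stays
below its initial value, hence below `ω / C`.  A continuity argument at the first time where
the smallness could fail shows that it never does. -/

open Set

theorem le_mul_exp_of_deriv_le_mul_self {f : ℝ → ℝ} {K a b : ℝ} (hf : Differentiable ℝ f)
    (bound : ∀ x ∈ Ico a b, deriv f x ≤ K * f x) :
    ∀ x ∈ Icc a b, f x ≤ f a * Real.exp (K * (x - a)) := by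
  intro x hx
  have := le_gronwallBound_of_liminf_deriv_right_le (ε := 0) hf.continuous.continuousOn
    (fun y _ _ hr => (hf y).hasDerivAt.hasDerivWithinAt.liminf_right_slope_le hr) le_rfl
    (fun y hy => (add_zero (K * f y)).symm ▸ bound y hy) x hx
  rwa [gronwallBound_ε0] at this

theorem forall_lt_of_continuous_of_forall_Ico_lt {g : ℝ → ℝ} {a c : ℝ} (hg : Continuous g)
    (step : ∀ T, a ≤ T → (∀ s ∈ Ico a T, g s < c) → g T < c) :
    ∀ t, a ≤ t → g t < c := by
  by_contra! hbad
  obtain ⟨t₀, ht₀, hgt₀⟩ := hbad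
  set S : Set ℝ := Ici a ∩ {s | c ≤ g s}
  have hS_closed : IsClosed S := isClosed_Ici.inter (isClosed_le continuous_const hg)
  have hS_bdd : BddBelow S := ⟨a, fun _ hs => hs.1⟩
  obtain ⟨haT, hcT⟩ : sInf S ∈ S := hS_closed.csInf_mem ⟨t₀, ht₀, hgt₀⟩ hS_bdd
  have before : ∀ s ∈ Ico a (sInf S), g s < c := fun s hs =>
    lt_of_not_ge fun hcs => (csInf_le hS_bdd ⟨hs.1, hcs⟩).not_gt hs.2
  exact (step _ haT before).not_ge hcT

theorem stmt14 (φ h : ℝ → ℝ) (ω C κ : ℝ) (hω : 0 < ω) (hC : 0 < C) (hκ : 0 < κ)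
    (hφdiff : Differentiable ℝ φ)
    (hφ : ∀ t, 0 ≤ t → 0 ≤ φ t) (hh : ∀ t, 0 ≤ t → 0 ≤ h t)
    (hineq : ∀ t, 0 ≤ t → deriv φ t ≤ -ω * φ t + h t * (C * φ t ^ (κ / 2) - ω))
    (hsmall : φ 0 ^ (κ / 2) < ω / C) :
    ∀ t, 0 ≤ t → φ t ≤ Real.exp (-ω * t) * φ 0 := by
  have decay : ∀ T, 0 ≤ T → (∀ s ∈ Ico 0 T, φ s ^ (κ / 2) < ω / C) →
      φ T ≤ Real.exp (-ω * T) * φ 0 := by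
    intro T hT hsmall_before
    have linear : ∀ s ∈ Ico 0 T, deriv φ s ≤ -ω * φ s := fun s hs => by
      have hbracket : C * φ s ^ (κ / 2) - ω ≤ 0 := by
        have := (lt_div_iff₀' hC).1 (hsmall_before s hs)
        linarith
      linarith [hineq s hs.1, mul_nonpos_of_nonneg_of_nonpos (hh s hs.1) hbracket]
    simpa [mul_comm] using le_mul_exp_of_deriv_le_mul_self hφdiff linear T ⟨hT, le_rfl⟩
  have hcont : Continuous fun s => φ s ^ (κ / 2) :=
    hφdiff.continuous.rpow_const fun _ => Or.inr (by positivity)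
  have small : ∀ t, 0 ≤ t → φ t ^ (κ / 2) < ω / C := by
    refine forall_lt_of_continuous_of_forall_Ico_lt hcont fun T hT hbefore => ?_
    have hφT : φ T ≤ φ 0 := (decay T hT hbefore).trans <|
      mul_le_of_le_one_left (hφ 0 le_rfl) (Real.exp_le_one_iff.2 (by nlinarith))
    exact (Real.rpow_le_rpow (hφ T hT) hφT (by positivity)).trans_lt hsmall
  exact fun t ht => decay t ht fun s hs => small s hs.1
end
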